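/- Regarding a = a(i,j) of Table 1 as an 8×8 matrix A over ℚ, b as a row vector, and 𝟙 as the all-ones column vector, the linear stability weights of the scheme are bᵀ Aᵏ⁻¹ 𝟙 = 1/k! for k = 1, 2, 3, 4, 5, 6, while bᵀ A⁶ 𝟙 = 29/178200 and bᵀ A⁷ 𝟙 = 0; consequently the stability function of the scheme is the polynomial Φ(z) = 1 + z + z²/2! + z³/3! + z⁴/4! + z⁵/5! + z⁶/6! + (29/178200) z⁷ for all z. -/

import Mathlib

/-!
The weight `bᵀ Aᵏ 𝟙` pairs `b` with the vector `Aᵏ 𝟙`, which we compute by the recursion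
`Aᵏ⁺¹ 𝟙 = A (Aᵏ 𝟙)` starting from `A 𝟙 = c`. As `A` is strictly lower triangular, each step
shifts the support of the vector down by at least one row, and since `a(5,4) = 0` the chain
already dies at `A⁷ 𝟙 = 0`.
-/

open Finset Matrix

/-- Coefficient matrix `a` of the paper's eight-stage sixth-order scheme (Table 1). -/
def a : Matrix (Fin 8) (Fin 8) ℚ :=
  !![0,      0,      0,      0,     0,      0,      0,     0;
     1/6,    0,      0,      0,     0,      0,      0,     0;
     1/12,   1/12,   0,      0,     0,      0,      0,     0;
     0,      -4/33,  5/11,   0,     0,      0,      0,     0;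
     -1/4,   -29/44, 31/22,  0,     0,      0,      0,     0;
     3/11,   8/33,   -4/11,  1/11,  14/33,  0,      0,     0;
     -17/48, -5/12,  1,      1,     -13/12, 11/16,  0,     0;
     20/39,  12/39,  -31/39, -1/39, 34/39,  -11/39, 16/39, 0]

/-- Weights `b` of Table 1. -/
def b : Fin 8 → ℚ := ![13/200, 0, 4/25, 11/40, 0, 11/40, 4/25, 13/200]

/-- Abscissae `c i = Σ_j a i j` of Table 1. -/
def c : Fin 8 → ℚ := fun i => ∑ j, a i j

theorem Matrix.pow_succ_mulVec {n R : Type*} [Fintype n] [DecidableEq n] [Semiring R]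
    (A : Matrix n n R) (k : ℕ) (v : n → R) : (A ^ (k + 1)) *ᵥ v = A *ᵥ ((A ^ k) *ᵥ v) := by
  rw [pow_succ', ← mulVec_mulVec]

lemma c_eq : c = ![0, 1/6, 1/6, 1/3, 1/2, 2/3, 5/6, 1] := by
  ext i; fin_cases i <;> norm_num [c, a, Fin.sum_univ_succ]

lemma a_mulVec_one : a *ᵥ 1 = c := by
  ext i; simp [mulVec, dotProduct, c]

lemma a_pow_two_mulVec_one : (a ^ 2) *ᵥ 1 = ![0, 0, 1/72, 1/18, 1/8, 2/9, 25/72, 1/2] := by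
  rw [pow_succ_mulVec, pow_one, a_mulVec_one, c_eq]
  simp only [a, cons_mulVec, cons_dotProduct, dotProduct_of_isEmpty, empty_mulVec]
  norm_num

lemma a_pow_three_mulVec_one :
    (a ^ 3) *ᵥ 1 = ![0, 0, 0, 5/792, 31/1584, 7/132, 25/288, 55/312] := by
  rw [pow_succ_mulVec, a_pow_two_mulVec_one]
  simp only [a, cons_mulVec, cons_dotProduct, dotProduct_of_isEmpty, empty_mulVec]
  norm_num

lemma a_pow_four_mulVec_one :
    (a ^ 4) *ᵥ 1 = ![0, 0, 0, 0, 0, 29/3267, 205/9504, 145/3861] := by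
  rw [pow_succ_mulVec, a_pow_three_mulVec_one]
  simp only [a, cons_mulVec, cons_dotProduct, dotProduct_of_isEmpty, empty_mulVec]
  norm_num

lemma a_pow_five_mulVec_one : (a ^ 5) *ᵥ 1 = ![0, 0, 0, 0, 0, 0, 29/4752, 49/7722] := by
  rw [pow_succ_mulVec, a_pow_four_mulVec_one]
  simp only [a, cons_mulVec, cons_dotProduct, dotProduct_of_isEmpty, empty_mulVec]
  norm_num

lemma a_pow_six_mulVec_one : (a ^ 6) *ᵥ 1 = ![0, 0, 0, 0, 0, 0, 0, 29/11583] := by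
  rw [pow_succ_mulVec, a_pow_five_mulVec_one]
  simp only [a, cons_mulVec, cons_dotProduct, dotProduct_of_isEmpty, empty_mulVec]
  norm_num

lemma a_pow_seven_mulVec_one : (a ^ 7) *ᵥ 1 = 0 := by
  rw [pow_succ_mulVec, a_pow_six_mulVec_one]
  simp only [a, cons_mulVec, cons_dotProduct, dotProduct_of_isEmpty, empty_mulVec]
  norm_num [← zero_empty]

lemma b_dotProduct (v : Fin 8 → ℚ) :
    b ⬝ᵥ v = 13/200 * (v 0 + v 7) + 4/25 * (v 2 + v 6) + 11/40 * (v 3 + v 5) := by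
  simp only [b, dotProduct, Fin.sum_univ_eight, Matrix.cons_val]
  ring

lemma b_dotProduct_a_pow_mulVec_one {k : ℕ} (hk : k < 8) :
    b ⬝ᵥ (a ^ k) *ᵥ 1 = ![1, 1/2, 1/6, 1/24, 1/120, 1/720, 29/178200, 0] ⟨k, hk⟩ := by
  interval_cases k <;> rw [b_dotProduct] <;>
    simp [a_mulVec_one, c_eq, a_pow_two_mulVec_one, a_pow_three_mulVec_one,
      a_pow_four_mulVec_one, a_pow_five_mulVec_one, a_pow_six_mulVec_one,
      a_pow_seven_mulVec_one] <;> norm_num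

/-- the linear stability weights of Table 1 are `bᵀ Aᵏ⁻¹ 𝟙 = 1/k!` for
`k = 1,…,6`, `bᵀ A⁶ 𝟙 = 29/178200`, `bᵀ A⁷ 𝟙 = 0`; hence the stability function is
`Φ(z) = 1 + z + z²/2! + z³/3! + z⁴/4! + z⁵/5! + z⁶/6! + (29/178200) z⁷` for all `z`. -/
theorem stability_function_RK6 :
    (∀ k : ℕ, 1 ≤ k → k ≤ 6 → b ⬝ᵥ (a ^ (k - 1)).mulVec 1 = 1 / (Nat.factorial k : ℚ)) ∧
    b ⬝ᵥ (a ^ 6).mulVec 1 = 29 / 178200 ∧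
    b ⬝ᵥ (a ^ 7).mulVec 1 = 0 ∧
    (∀ z : ℝ,
      1 + ∑ k ∈ Finset.Icc 1 8, ((b ⬝ᵥ (a ^ (k - 1)).mulVec 1 : ℚ) : ℝ) * z ^ k =
        1 + z + z ^ 2 / (Nat.factorial 2 : ℝ) + z ^ 3 / (Nat.factorial 3 : ℝ)
          + z ^ 4 / (Nat.factorial 4 : ℝ) + z ^ 5 / (Nat.factorial 5 : ℝ)
          + z ^ 6 / (Nat.factorial 6 : ℝ) + (29 / 178200) * z ^ 7) := by
  refine ⟨fun k h1 h6 => ?_, (b_dotProduct_a_pow_mulVec_one (k := 6) (by norm_num)).trans rfl,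
    (b_dotProduct_a_pow_mulVec_one (k := 7) (by norm_num)).trans rfl, fun z => ?_⟩
  · rw [b_dotProduct_a_pow_mulVec_one (by omega)]
    interval_cases k <;> simp [Nat.factorial]
  · have hIcc : Finset.Icc 1 8 = Finset.Ico 1 (1 + 8) := rfl
    rw [hIcc, Finset.sum_Ico_eq_sum_range]
    simp (disch := norm_num) only [Finset.sum_range_succ, Finset.sum_range_zero,
      Nat.add_sub_cancel_left, b_dotProduct_a_pow_mulVec_one]
    norm_num [Nat.factorial]
    ring
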